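/- Let k(x,y) = γ(x)|y−x|^{−α(x)−d} be a stable-like kernel with 0 < α̲ ≤ α(x) ≤ ᾱ < 2 and γ bounded by γ̄, and let C^{n,p} be its cube discretization with cutoff parameter p ∈ (0,1], 1/p ≥ ᾱ. Then for all x ∈ ℝ^d and y ∈ B_1(0) with |[y]_n| > 2√d/n^p, n^d C^{n,p}([x]_n, [x]_n + [y]_n) ≤ γ̄ · 2^{ᾱ+d+1} · d^{d/2} · V_d · |y|^{−ᾱ−d}, where V_d is the volume of the unit ball and [·]_n denotes rounding to the nearest point of (1/n)ℤ^d. -/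

import Mathlib

/-!
Take `x' ∈ cube [x]_n` and `y' ∈ cube ([x]_n + [y]_n)`. Then `y' - x'` lies within `√d/n` of
`[y]_n`, and `y` within `√d/(2n)`; as the cutoff gives `|[y]_n| > 2√d/n^p ≥ 2√d/n`, this forces
`|y' - x'| ≥ 2|y|/5`. Since `2|y|/5 < 1` and `α ≤ ᾱ`, the kernel is bounded on the pair of cubes by
`γ̄ (2|y|/5)^{-ᾱ-d}`, and the two cube volumes `n^{-d}` cancel the factor `n^{2d}`. It remains to
compare constants: `(5/2)^{ᾱ+d} ≤ 2^{ᾱ+d+1} 2^d` because `ᾱ < 2`, and `2^d ≤ d^{d/2} V_d` because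
a cube of side `1` lies in a closed ball of radius `√d/2`.
-/

open MeasureTheory Filter Topology
open scoped ENNReal NNReal Pointwise

noncomputable section

abbrev Eucl (d : ℕ) := EuclideanSpace ℝ (Fin d)

/-- The point of `ℝ^d` corresponding to the lattice point `a/n`, `a ∈ ℤ^d`. -/
def latticePt (d n : ℕ) (a : Fin d → ℤ) : Eucl d := WithLp.toLp 2 (fun i => (a i : ℝ) / n)

/-- The half-open cube of side `1/n` centred at the lattice point `a/n`. -/
def cube (d n : ℕ) (a : Fin d → ℤ) : Set (Eucl d) :=
  {x | ∀ i, (a i : ℝ)/n - 1/(2*n) ≤ x i ∧ x i < (a i : ℝ)/n + 1/(2*n)}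

/-- `[x]_n`: the index of the lattice point of `(1/n)ℤ^d` nearest to `x`. -/
def lattOf (d n : ℕ) (x : Eucl d) : Fin d → ℤ := fun i => ⌊n * x i + 1/2⌋

/-- The discretised conductances `C^{n,p}(a,b) = n^d ∫_{ā}∫_{b̄} k(x,y) dx dy` for
`|a−b| > 2√d/n^p` and `0` otherwise. -/
def Cnp (d n : ℕ) (p : ℝ) (k : Eucl d → Eucl d → ℝ) (a b : Fin d → ℤ) : ℝ :=
  if ‖latticePt d n a - latticePt d n b‖ > 2 * Real.sqrt d / (n : ℝ) ^ p then
    (n : ℝ) ^ d * ∫ x in cube d n a, ∫ y in cube d n b, k x y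
  else 0

lemma cube_eq_preimage_pi (d n : ℕ) (a : Fin d → ℤ) :
    cube d n a = (MeasurableEquiv.toLp 2 (Fin d → ℝ)).symm ⁻¹'
      Set.univ.pi fun i => Set.Ico ((a i : ℝ) / n - 1 / (2 * n)) ((a i : ℝ) / n + 1 / (2 * n)) := by
  ext x
  simp [cube, Set.mem_pi, MeasurableEquiv.coe_toLp_symm]

lemma volume_cube (d n : ℕ) (a : Fin d → ℤ) :
    volume (cube d n a) = ENNReal.ofReal (n : ℝ)⁻¹ ^ d := by
  have hside : ∀ i, ((a i : ℝ) / n + 1 / (2 * n)) - ((a i : ℝ) / n - 1 / (2 * n)) = (n : ℝ)⁻¹ :=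
    fun i => by ring
  rw [cube_eq_preimage_pi,
    (EuclideanSpace.volume_preserving_symm_measurableEquiv_toLp (Fin d)).measure_preimage
      (MeasurableSet.univ_pi fun i => measurableSet_Ico).nullMeasurableSet, volume_pi_pi]
  simp only [Real.volume_Ico, hside, Finset.prod_const, Finset.card_univ, Fintype.card_fin]

lemma volume_real_cube (d n : ℕ) (a : Fin d → ℤ) :
    volume.real (cube d n a) = (n : ℝ)⁻¹ ^ d := by
  rw [measureReal_def, volume_cube, ENNReal.toReal_pow, ENNReal.toReal_ofReal (by positivity)]

lemma volume_cube_lt_top (d n : ℕ) (a : Fin d → ℤ) : volume (cube d n a) < ∞ := by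
  rw [volume_cube]
  exact ENNReal.pow_lt_top ENNReal.ofReal_lt_top

lemma norm_le_sqrt_mul_of_forall_abs_le {d : ℕ} {x : Eucl d} {c : ℝ} (hc : 0 ≤ c)
    (h : ∀ i, |x i| ≤ c) : ‖x‖ ≤ √d * c := by
  rw [EuclideanSpace.norm_eq, ← Real.sqrt_sq hc, ← Real.sqrt_mul (Nat.cast_nonneg d)]
  gcongr
  calc ∑ i, ‖x i‖ ^ 2 ≤ ∑ _i : Fin d, c ^ 2 := by
        gcongr with i
        exact h i
    _ = d * c ^ 2 := by simp

lemma cube_subset_closedBall (d n : ℕ) (a : Fin d → ℤ) :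
    cube d n a ⊆ Metric.closedBall (latticePt d n a) (√d / (2 * n)) := by
  intro w hw
  rw [Metric.mem_closedBall, dist_eq_norm, div_eq_mul_one_div]
  refine norm_le_sqrt_mul_of_forall_abs_le (by positivity) fun i => ?_
  have hwi : (w - latticePt d n a) i = w i - (a i : ℝ) / n := by simp [latticePt]
  rw [hwi, abs_le]
  constructor <;> linarith [(hw i).1, (hw i).2]

lemma mem_cube_lattOf {d n : ℕ} (hn : 0 < n) (y : Eucl d) : y ∈ cube d n (lattOf d n y) := by
  intro i
  have hn' : (0 : ℝ) < n := by exact_mod_cast hn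
  have h1 := Int.floor_le ((n : ℝ) * y i + 1 / 2)
  have h2 := Int.lt_floor_add_one ((n : ℝ) * y i + 1 / 2)
  set c : ℤ := ⌊(n : ℝ) * y i + 1 / 2⌋
  have hlo : (c : ℝ) / n - 1 / (2 * n) = (c - 1 / 2) / n := by field_simp
  have hhi : (c : ℝ) / n + 1 / (2 * n) = (c + 1 / 2) / n := by field_simp
  refine ⟨?_, ?_⟩
  · rw [lattOf, hlo, div_le_iff₀ hn']
    linarith
  · rw [lattOf, hhi, lt_div_iff₀ hn']
    linarith

lemma latticePt_add (d n : ℕ) (a b : Fin d → ℤ) :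
    latticePt d n (a + b) = latticePt d n a + latticePt d n b := by
  ext i
  simp [latticePt, add_div]

lemma norm_sub_latticePt_lattOf_le {d n : ℕ} (hn : 0 < n) (y : Eucl d) :
    ‖y - latticePt d n (lattOf d n y)‖ ≤ √d / n / 2 := by
  simpa [dist_eq_norm, div_div, mul_comm] using cube_subset_closedBall d n _ (mem_cube_lattOf hn y)

lemma norm_sub_sub_latticePt_le {d n : ℕ} {a b : Fin d → ℤ} {x y : Eucl d}
    (hx : x ∈ cube d n a) (hy : y ∈ cube d n (a + b)) :
    ‖y - x - latticePt d n b‖ ≤ √d / n := by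
  have hx' := Metric.mem_closedBall.1 (cube_subset_closedBall d n a hx)
  have hy' := Metric.mem_closedBall.1 (cube_subset_closedBall d n (a + b) hy)
  rw [dist_eq_norm, latticePt_add] at *
  calc ‖y - x - latticePt d n b‖
      = ‖(y - (latticePt d n a + latticePt d n b)) - (x - latticePt d n a)‖ := by congr 1; abel
    _ ≤ √d / (2 * n) + √d / (2 * n) := (norm_sub_le _ _).trans (add_le_add hy' hx')
    _ = √d / n := by ring

lemma two_fifths_mul_norm_le {E : Type*} [SeminormedAddCommGroup E] {v y z : E} {r : ℝ}
    (hz : 2 * r < ‖z‖) (hv : ‖v - z‖ ≤ r) (hy : ‖y - z‖ ≤ r / 2) : 2 / 5 * ‖y‖ ≤ ‖v‖ := by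
  have h1 := norm_sub_norm_le y z
  have h2 := norm_sub_norm_le z v
  rw [norm_sub_rev] at h2
  linarith

lemma norm_mul_rpow_le {c C a A e r t : ℝ} (hc : 0 ≤ c) (hcC : c ≤ C) (ha : 0 ≤ a) (haA : a ≤ A)
    (he : 0 ≤ e) (ht : 0 < t) (ht1 : t ≤ 1) (htr : t ≤ r) :
    ‖c * r ^ (-a - e)‖ ≤ C * t ^ (-A - e) := by
  have hr0 : 0 ≤ r ^ (-a - e) := Real.rpow_nonneg (ht.le.trans htr) _
  rw [norm_mul, Real.norm_of_nonneg hc, Real.norm_of_nonneg hr0]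
  have hr : r ^ (-a - e) ≤ t ^ (-A - e) :=
    (Real.rpow_le_rpow_of_nonpos ht htr (by linarith)).trans
      (Real.rpow_le_rpow_of_exponent_ge ht ht1 (by linarith))
  exact mul_le_mul hcC hr hr0 (hc.trans hcC)

lemma pow_mul_Cnp_le {d n : ℕ} (hn : 0 < n) (p : ℝ) {k : Eucl d → Eucl d → ℝ} {a b : Fin d → ℤ}
    {M : ℝ} (hM : 0 ≤ M) (hk : ∀ x ∈ cube d n a, ∀ y ∈ cube d n b, ‖k x y‖ ≤ M) :
    (n : ℝ) ^ d * Cnp d n p k a b ≤ M := by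
  have hinner : ∀ x ∈ cube d n a, ‖∫ y in cube d n b, k x y‖ ≤ M * (n : ℝ)⁻¹ ^ d := fun x hx => by
    simpa only [volume_real_cube] using
      norm_setIntegral_le_of_norm_le_const (volume_cube_lt_top d n _) (hk x hx)
  have houter : ‖∫ x in cube d n a, ∫ y in cube d n b, k x y‖ ≤
      M * (n : ℝ)⁻¹ ^ d * (n : ℝ)⁻¹ ^ d := by
    simpa only [volume_real_cube] using
      norm_setIntegral_le_of_norm_le_const (volume_cube_lt_top d n _) hinner
  have hn' : (n : ℝ) ≠ 0 := by positivity
  unfold Cnp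
  split_ifs
  · calc (n : ℝ) ^ d * ((n : ℝ) ^ d * ∫ x in cube d n a, ∫ y in cube d n b, k x y)
        ≤ (n : ℝ) ^ d * ((n : ℝ) ^ d * (M * (n : ℝ)⁻¹ ^ d * (n : ℝ)⁻¹ ^ d)) := by
          gcongr
          exact (le_abs_self _).trans houter
      _ = M * ((n : ℝ) * (n : ℝ)⁻¹) ^ d * ((n : ℝ) * (n : ℝ)⁻¹) ^ d := by ring
      _ = M := by simp [hn']
  · simpa using hM

lemma two_pow_le_sqrt_rpow_mul_volume_ball (d : ℕ) :
    (2 : ℝ) ^ d ≤ (d : ℝ) ^ ((d : ℝ) / 2) * (volume (Metric.ball (0 : Eucl d) 1)).toReal := by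
  have h := measureReal_mono (μ := volume) (cube_subset_closedBall d 1 0)
    measure_closedBall_lt_top.ne
  have hsqrt : √(d : ℝ) ^ d = (d : ℝ) ^ ((d : ℝ) / 2) := by
    rw [Real.sqrt_eq_rpow, ← Real.rpow_natCast, ← Real.rpow_mul (Nat.cast_nonneg d)]
    ring_nf
  rw [volume_real_cube, Measure.addHaar_real_closedBall _ _ (by positivity),
    finrank_euclideanSpace_fin, measureReal_def, Nat.cast_one, inv_one, one_pow, mul_one,
    div_pow, hsqrt, div_mul_eq_mul_div, le_div_iff₀ (by positivity), one_mul] at h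
  exact h

lemma five_halves_rpow_le {αu : ℝ} (hαu : αu < 2) (d : ℕ) :
    (5 / 2 : ℝ) ^ (αu + d) ≤ 2 ^ (αu + d + 1) * 2 ^ d := by
  calc (5 / 2 : ℝ) ^ (αu + d) = 2 ^ (αu + d) * (5 / 4) ^ (αu + d) := by
        rw [← Real.mul_rpow (by norm_num) (by norm_num)]; norm_num
    _ ≤ 2 ^ (αu + d) * (5 / 4) ^ ((d : ℝ) + 2) := by
        gcongr _ * ?_
        exact Real.rpow_le_rpow_of_exponent_le (by norm_num) (by linarith)
    _ = 2 ^ (αu + d) * ((5 / 4) ^ d * (5 / 4) ^ 2) := by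
        rw [Real.rpow_add (by norm_num : (0 : ℝ) < 5 / 4), Real.rpow_natCast, Real.rpow_two]
    _ ≤ 2 ^ (αu + d) * (2 ^ d * 2) := by gcongr <;> norm_num
    _ = 2 ^ (αu + d + 1) * 2 ^ d := by rw [Real.rpow_add_one (by norm_num)]; ring

lemma two_fifths_mul_rpow_le {αu : ℝ} (hαu : αu < 2) (d : ℕ) {r : ℝ} (hr : 0 ≤ r) :
    (2 / 5 * r) ^ (-αu - d) ≤ 2 ^ (αu + d + 1) * (d : ℝ) ^ ((d : ℝ) / 2) *
      (volume (Metric.ball (0 : Eucl d) 1)).toReal * r ^ (-αu - d) := by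
  rw [← neg_add', Real.mul_rpow (by norm_num) hr, Real.rpow_neg (by norm_num),
    ← Real.inv_rpow (by norm_num), mul_assoc _ _ (volume _).toReal]
  norm_num only
  gcongr
  exact (five_halves_rpow_le hαu d).trans
    (by gcongr; exact two_pow_le_sqrt_rpow_mul_volume_ball d)

theorem stable_like_discretization_bound_general (d n : ℕ) (hn : 0 < n)
    (p : ℝ) (hp1 : p ≤ 1)
    (αl αu : ℝ) (hαl : 0 < αl) (hαu : αu < 2)
    (α : Eucl d → ℝ) (hα : ∀ x, αl ≤ α x ∧ α x ≤ αu)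
    (γ : Eucl d → ℝ) (γbar : ℝ) (hγ : ∀ x, 0 ≤ γ x ∧ γ x ≤ γbar)
    (k : Eucl d → Eucl d → ℝ)
    (hk : ∀ x y, k x y = γ x * ‖y - x‖ ^ (-(α x) - d))
    (x y : Eucl d) (hy : y ∈ Metric.ball (0 : Eucl d) 1)
    (hcut : ‖latticePt d n (lattOf d n y)‖ > 2 * Real.sqrt d / (n : ℝ) ^ p) :
    (n : ℝ) ^ d * Cnp d n p k (lattOf d n x) (lattOf d n x + lattOf d n y) ≤
      γbar * 2 ^ (αu + d + 1) * (d : ℝ) ^ ((d : ℝ) / 2) *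
        (volume (Metric.ball (0 : Eucl d) 1)).toReal * ‖y‖ ^ (-αu - d) := by
  set z := latticePt d n (lattOf d n y)
  have hz : 2 * (√d / n) < ‖z‖ := by
    refine lt_of_le_of_lt ?_ hcut
    rw [mul_div_assoc']
    gcongr
    exact (Real.rpow_le_rpow_of_exponent_le (by exact_mod_cast hn) hp1).trans_eq (Real.rpow_one _)
  have hyz := norm_sub_latticePt_lattOf_le hn y
  have hy0 : 0 < ‖y‖ := by
    linarith [norm_sub_norm_le z y, norm_sub_rev z y, (by positivity : 0 ≤ √(d : ℝ) / n)]
  have hy1 : ‖y‖ < 1 := mem_ball_zero_iff.1 hy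
  have hγbar : 0 ≤ γbar := (hγ x).1.trans (hγ x).2
  have hkernel : ∀ x' ∈ cube d n (lattOf d n x), ∀ y' ∈ cube d n (lattOf d n x + lattOf d n y),
      ‖k x' y'‖ ≤ γbar * (2 / 5 * ‖y‖) ^ (-αu - d) := fun x' hx' y' hy' => by
    rw [hk]
    exact norm_mul_rpow_le (hγ x').1 (hγ x').2 (hαl.le.trans (hα x').1) (hα x').2
      (Nat.cast_nonneg d) (by positivity) (by linarith)
      (two_fifths_mul_norm_le hz (norm_sub_sub_latticePt_le hx' hy') hyz)
  calc (n : ℝ) ^ d * Cnp d n p k (lattOf d n x) (lattOf d n x + lattOf d n y)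
      ≤ γbar * (2 / 5 * ‖y‖) ^ (-αu - d) := pow_mul_Cnp_le hn p (by positivity) hkernel
    _ ≤ γbar * (2 ^ (αu + d + 1) * (d : ℝ) ^ ((d : ℝ) / 2) *
        (volume (Metric.ball (0 : Eucl d) 1)).toReal * ‖y‖ ^ (-αu - d)) := by
      gcongr
      exact two_fifths_mul_rpow_le hαu d (norm_nonneg y)
    _ = _ := by ring

/-- For the stable-like kernel `k(x,y) = γ(x)|y−x|^{−α(x)−d}` with
`0 < α̲ ≤ α ≤ ᾱ < 2`, `0 ≤ γ ≤ γ̄` and cutoff parameter `p` with `1/p ≥ ᾱ`, one has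
`n^d C^{n,p}([x]_n, [x]_n + [y]_n) ≤ γ̄ 2^{ᾱ+d+1} d^{d/2} V_d |y|^{−ᾱ−d}`
for `y ∈ B₁(0)` with `|[y]_n| > 2√d/n^p`. -/
theorem stable_like_discretization_bound (d n : ℕ) (hn : 0 < n)
    (p : ℝ) (hp : 0 < p) (hp1 : p ≤ 1)
    (αl αu : ℝ) (hαl : 0 < αl) (hαu : αu < 2) (hpα : αu ≤ 1 / p)
    (α : Eucl d → ℝ) (hα : ∀ x, αl ≤ α x ∧ α x ≤ αu)
    (γ : Eucl d → ℝ) (γbar : ℝ) (hγ : ∀ x, 0 ≤ γ x ∧ γ x ≤ γbar)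
    (k : Eucl d → Eucl d → ℝ)
    (hk : ∀ x y, k x y = γ x * ‖y - x‖ ^ (-(α x) - d))
    (x y : Eucl d) (hy : y ∈ Metric.ball (0 : Eucl d) 1)
    (hcut : ‖latticePt d n (lattOf d n y)‖ > 2 * Real.sqrt d / (n : ℝ) ^ p) :
    (n : ℝ) ^ d * Cnp d n p k (lattOf d n x) (lattOf d n x + lattOf d n y) ≤
      γbar * 2 ^ (αu + d + 1) * (d : ℝ) ^ ((d : ℝ) / 2) *
        (volume (Metric.ball (0 : Eucl d) 1)).toReal * ‖y‖ ^ (-αu - d) :=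
  stable_like_discretization_bound_general d n hn p hp1 αl αu hαl hαu α hα γ γbar hγ k hk x y hy
    hcut
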